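/- The interlace polynomial of the complete graph K_n (n ≥ 1) is q(K_n) = 2^{n−1} x. -/

import Mathlib

/-- The pair `x, y` lies in different classes among (neighbors of `a` only,
neighbors of `b` only, neighbors of both), with both distinct from `a` and `b`. -/
def togglePair {V : Type} (G : SimpleGraph V) (a b x y : V) : Prop :=
  (x ≠ a ∧ x ≠ b ∧ y ≠ a ∧ y ≠ b) ∧
  (G.Adj a x ∨ G.Adj b x) ∧ (G.Adj a y ∨ G.Adj b y) ∧
  ¬((G.Adj a x ↔ G.Adj a y) ∧ (G.Adj b x ↔ G.Adj b y))

lemma togglePair_comm {V : Type} (G : SimpleGraph V) (a b x y : V) :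
    togglePair G a b x y ↔ togglePair G a b y x := by
  unfold togglePair; tauto

/-- The pivot `G^{ab}`: toggle the adjacency of every pair of vertices (distinct
from `a`, `b`) lying in different classes among (neighbors of `a` only,
neighbors of `b` only, neighbors of both); all other adjacencies unchanged. -/
def pivot {V : Type} (G : SimpleGraph V) (a b : V) : SimpleGraph V where
  Adj x y := (togglePair G a b x y ∧ x ≠ y ∧ ¬ G.Adj x y) ∨
    (¬ togglePair G a b x y ∧ G.Adj x y)
  symm := by
    constructor
    intro x y h
    rcases h with ⟨ht, hxy, hna⟩ | ⟨ht, ha⟩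
    · exact Or.inl ⟨(togglePair_comm G a b x y).mp ht, hxy.symm,
        fun h => hna h.symm⟩
    · exact Or.inr ⟨fun h => ht ((togglePair_comm G a b y x).mp h), ha.symm⟩
  loopless := by
    constructor
    intro x h
    rcases h with ⟨_, hxy, _⟩ | ⟨_, ha⟩
    · exact hxy rfl
    · exact G.irrefl ha

/-- Deletion of the vertex `a` from `G`. -/
def delVert {V : Type} (G : SimpleGraph V) (a : V) : SimpleGraph {v : V // v ≠ a} :=
  G.comap (fun v => v.1)

/-- `q` is an interlace polynomial map: invariant under graph isomorphism,
satisfying the pivot-deletion recursion `q(G) = q(G-a) + q(G^{ab}-b)` for every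
edge `ab`, and equal to `x^n` on the edgeless graph on `n` vertices. -/
def IsInterlacePoly
    (q : ∀ (V : Type) [Fintype V] [DecidableEq V], SimpleGraph V → Polynomial ℤ) : Prop :=
  (∀ (V W : Type) [Fintype V] [DecidableEq V] [Fintype W] [DecidableEq W]
      (G : SimpleGraph V) (H : SimpleGraph W), Nonempty (G ≃g H) → q V G = q W H) ∧
  (∀ (V : Type) [Fintype V] [DecidableEq V] (G : SimpleGraph V) (a b : V), G.Adj a b →
      q V G = q {v : V // v ≠ a} (delVert G a) +
        q {v : V // v ≠ b} (delVert (pivot G a b) b)) ∧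
  (∀ (V : Type) [Fintype V] [DecidableEq V],
      q V (⊥ : SimpleGraph V) = Polynomial.X ^ (Fintype.card V))


lemma pivot_top {V : Type} (a b : V) : pivot (⊤ : SimpleGraph V) a b = ⊤ := by
  ext x y
  simp only [pivot, SimpleGraph.top_adj]
  constructor
  · rintro (⟨_, h, _⟩ | ⟨_, h⟩) <;> exact h
  · intro h
    right
    refine ⟨?_, h⟩
    rintro ⟨⟨hxa, hxb, hya, hyb⟩, _, _, hne⟩
    exact hne ⟨⟨fun _ => Ne.symm hya, fun _ => Ne.symm hxa⟩,
      ⟨fun _ => Ne.symm hyb, fun _ => Ne.symm hxb⟩⟩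

lemma delVert_top {V : Type} (a : V) : delVert (⊤ : SimpleGraph V) a = ⊤ := by
  ext x y
  simp [delVert, Ne, Subtype.ext_iff]

lemma card_ne {V : Type} [Fintype V] [DecidableEq V] (a : V) :
    Fintype.card {v : V // v ≠ a} = Fintype.card V - 1 := by
  rw [Fintype.card_subtype_compl]; simp

theorem interlacePoly_complete
    (q : ∀ (V : Type) [Fintype V] [DecidableEq V], SimpleGraph V → Polynomial ℤ)
    (hq : IsInterlacePoly q)
    {V : Type} [Fintype V] [DecidableEq V] (hV : 1 ≤ Fintype.card V) :
    q V (⊤ : SimpleGraph V) = 2 ^ (Fintype.card V - 1) * Polynomial.X := by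
  obtain ⟨hiso, hrec, hbot⟩ := hq
  suffices H : ∀ n, ∀ (V : Type) [Fintype V] [DecidableEq V], Fintype.card V = n → 1 ≤ n →
      q V (⊤ : SimpleGraph V) = 2 ^ (n - 1) * Polynomial.X by
    exact H _ V rfl hV
  intro n
  induction n using Nat.strong_induction_on with
  | _ n ih =>
    intro V _ _ hcard hn
    rcases eq_or_lt_of_le hn with h1 | h2
    · have hsub : Subsingleton V := by
        refine Fintype.card_le_one_iff_subsingleton.mp ?_
        omega
      have : (⊤ : SimpleGraph V) = ⊥ := by
        ext x y
        simp [Subsingleton.elim x y]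
      rw [this, hbot, hcard, ← h1]
      simp
    · obtain ⟨a, b, hab⟩ := Fintype.exists_pair_of_one_lt_card (α := V) (by omega)
      have := hrec V (⊤ : SimpleGraph V) a b (by simpa using hab)
      rw [delVert_top, pivot_top, delVert_top] at this
      have hca : Fintype.card {v : V // v ≠ a} = n - 1 := by rw [card_ne, hcard]
      have hcb : Fintype.card {v : V // v ≠ b} = n - 1 := by rw [card_ne, hcard]
      have ha := ih (n - 1) (by omega) {v : V // v ≠ a} hca (by omega)
      have hb := ih (n - 1) (by omega) {v : V // v ≠ b} hcb (by omega)
      rw [this, ha, hb, ← two_mul, ← mul_assoc]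
      congr 1
      rw [← pow_succ']
      congr 1
      omega
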